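/- arXiv:2311.04508 — 2 statements merged into one kernel-verified Lean document; each statement's English description precedes it below -/
import Mathlib

section
/- Let Z_i ∈ M_{k_i}(ℂ), W_i ∈ M_{k_i,k_{i+1}}(ℂ), Y_i ∈ M_{n_i,k_i}(ℂ), Ỹ_i ∈ M_{k_i,n_{i+1}}(ℂ) (for 1 ≤ i ≤ L, with W's for 1 ≤ i ≤ L−1) satisfy the constraints Z_iW_i − W_iZ_{i+1} = Ỹ_iY_{i+1}. Define φ_{ij}(z) = Y_i(z1−Z_i)⁻¹W_iW_{i+1}⋯W_{j−2}Ỹ_{j−1} for i < j (with the empty product of W's for j = i+1). Then for all i < j and all z where the resolvents are defined: Σ_{k=i+1}^{j−1} φ_{ik}(z)·φᵏʲ_inv(z) = −φ_{ij}(z) − φ_ij^inv(z), where φ_{ij}^inv(z) = −Y_iW_iW_{i+1}⋯W_{j−2}(z1−Z_{j−1})⁻¹Ỹ_{j−1}. -/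
/-!
The constraint reads `Ỹ_p Y_{p+1} = W_p (z - Z_{p+1}) - (z - Z_p) W_p`. Hence each summand
`φ_{i,p+1} φ^{inv}_{p+1,j}` is the difference `T_p - T_{p+1}` of consecutive terms of
`T_p = Y_i (z - Z_i)⁻¹ W_i ⋯ W_{p-1} (z - Z_p) W_p ⋯ W_{j-2} (z - Z_{j-1})⁻¹ Ỹ_{j-1}`,
so the sum telescopes to `T_i - T_{j-1}`. In the two end terms one resolvent cancels against
`z - Z_p`, leaving `T_i = -φ^{inv}_{ij}` and `T_{j-1} = φ_{ij}`.
-/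

open Matrix

/-- The ordered product `W j * W (j+1) * ⋯ * W (i-1)` (equal to `1` when `i = j`,
and junk `0` when `j > i`). -/
noncomputable def Wprod (k : ℕ → ℕ)
    (W : ∀ i : ℕ, Matrix (Fin (k i)) (Fin (k (i + 1))) ℂ) (j : ℕ) :
    ∀ i : ℕ, Matrix (Fin (k j)) (Fin (k i)) ℂ
  | 0 => if h : j = 0 then by subst h; exact 1 else 0
  | (i + 1) => if h : j = i + 1 then by subst h; exact 1 else Wprod k W j i * W i

/-- `φ_{ij}(z) = Y_i (z·1 − Z_i)⁻¹ W_i ⋯ W_{j-2} Ỹ_{j-1}` (junk `0` for `j = 0`). -/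
noncomputable def phiF (k n : ℕ → ℕ)
    (Z : ∀ i : ℕ, Matrix (Fin (k i)) (Fin (k i)) ℂ)
    (Y : ∀ i : ℕ, Matrix (Fin (n i)) (Fin (k i)) ℂ)
    (Yt : ∀ i : ℕ, Matrix (Fin (k i)) (Fin (n (i + 1))) ℂ)
    (W : ∀ i : ℕ, Matrix (Fin (k i)) (Fin (k (i + 1))) ℂ)
    (z : ℂ) (i : ℕ) : ∀ j : ℕ, Matrix (Fin (n i)) (Fin (n j)) ℂ
  | 0 => 0
  | (j + 1) =>
      Y i * (z • (1 : Matrix (Fin (k i)) (Fin (k i)) ℂ) - Z i)⁻¹ * Wprod k W i j * Yt j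

/-- `φ^{inv}_{ij}(z) = −Y_i W_i ⋯ W_{j-2} (z·1 − Z_{j-1})⁻¹ Ỹ_{j-1}`
(junk `0` for `j = 0`). -/
noncomputable def phiInvF (k n : ℕ → ℕ)
    (Z : ∀ i : ℕ, Matrix (Fin (k i)) (Fin (k i)) ℂ)
    (Y : ∀ i : ℕ, Matrix (Fin (n i)) (Fin (k i)) ℂ)
    (Yt : ∀ i : ℕ, Matrix (Fin (k i)) (Fin (n (i + 1))) ℂ)
    (W : ∀ i : ℕ, Matrix (Fin (k i)) (Fin (k (i + 1))) ℂ)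
    (z : ℂ) (i : ℕ) : ∀ j : ℕ, Matrix (Fin (n i)) (Fin (n j)) ℂ
  | 0 => 0
  | (j + 1) =>
      -(Y i * Wprod k W i j *
        (z • (1 : Matrix (Fin (k j)) (Fin (k j)) ℂ) - Z j)⁻¹ * Yt j)


section Wprod

variable {k : ℕ → ℕ} (W : ∀ i : ℕ, Matrix (Fin (k i)) (Fin (k (i + 1))) ℂ)

@[simp]
lemma Wprod_self (j : ℕ) : Wprod k W j j = 1 := by
  cases j <;> simp [Wprod]

lemma Wprod_succ {j p : ℕ} (h : j ≤ p) : Wprod k W j (p + 1) = Wprod k W j p * W p := by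
  simp [Wprod, show j ≠ p + 1 by omega]

lemma mul_Wprod {p q : ℕ} (h : p < q) : W p * Wprod k W (p + 1) q = Wprod k W p q := by
  induction q, h using Nat.le_induction with
  | base => simp [Wprod_succ W le_rfl]
  | succ q hpq ih =>
    rw [Wprod_succ W (by omega), Wprod_succ W (by omega), ← Matrix.mul_assoc, ih]

end Wprod

lemma mul_smul_one_sub_sub_smul_one_sub_mul {R l m : Type*} [CommRing R] [Fintype l] [Fintype m]
    [DecidableEq l] [DecidableEq m] (z : R) (A : Matrix l l R) (B : Matrix m m R)
    (W : Matrix l m R) : W * (z • 1 - B) - (z • 1 - A) * W = A * W - W * B := by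
  simp only [Matrix.mul_sub, Matrix.sub_mul, Matrix.mul_smul, Matrix.smul_mul, Matrix.mul_one,
    Matrix.one_mul]
  abel

section Telescope

variable {k n : ℕ → ℕ} (Z : ∀ i : ℕ, Matrix (Fin (k i)) (Fin (k i)) ℂ)
  (Y : ∀ i : ℕ, Matrix (Fin (n i)) (Fin (k i)) ℂ)
  (Yt : ∀ i : ℕ, Matrix (Fin (k i)) (Fin (n (i + 1))) ℂ)
  (W : ∀ i : ℕ, Matrix (Fin (k i)) (Fin (k (i + 1))) ℂ) (z : ℂ)

noncomputable def telescopeTerm (i q p : ℕ) : Matrix (Fin (n i)) (Fin (n (q + 1))) ℂ :=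
  Y i * (z • 1 - Z i)⁻¹ * Wprod k W i p * (z • 1 - Z p) * Wprod k W p q * (z • 1 - Z q)⁻¹ *
    Yt q

lemma phiF_mul_phiInvF {i p q : ℕ} (hip : i ≤ p) (hpq : p < q)
    (hcon : Z p * W p - W p * Z (p + 1) = Yt p * Y (p + 1)) :
    phiF k n Z Y Yt W z i (p + 1) * phiInvF k n Z Y Yt W z (p + 1) (q + 1)
      = telescopeTerm Z Y Yt W z i q p - telescopeTerm Z Y Yt W z i q (p + 1) := by
  rw [← mul_smul_one_sub_sub_smul_one_sub_mul z] at hcon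
  simp only [phiF, phiInvF, telescopeTerm]
  rw [Wprod_succ W hip, ← mul_Wprod W hpq]
  simp only [Matrix.mul_assoc, Matrix.mul_neg]
  rw [← Matrix.mul_assoc (Yt p), ← hcon]
  simp only [Matrix.mul_sub, Matrix.sub_mul, Matrix.mul_assoc, neg_sub]

lemma telescopeTerm_self_left {i q : ℕ} (hres : IsUnit (z • 1 - Z i)) :
    telescopeTerm Z Y Yt W z i q i = -phiInvF k n Z Y Yt W z i (q + 1) := by
  simp only [telescopeTerm, phiInvF, neg_neg, Wprod_self, Matrix.mul_one, Matrix.mul_assoc]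
  rw [Matrix.nonsing_inv_mul_cancel_left _ _ ((Matrix.isUnit_iff_isUnit_det _).mp hres)]

lemma telescopeTerm_self_right {i q : ℕ} (hres : IsUnit (z • 1 - Z q)) :
    telescopeTerm Z Y Yt W z i q q = phiF k n Z Y Yt W z i (q + 1) := by
  simp only [telescopeTerm, phiF, Wprod_self, Matrix.one_mul, Matrix.mul_assoc]
  rw [Matrix.mul_nonsing_inv_cancel_left _ _ ((Matrix.isUnit_iff_isUnit_det _).mp hres)]

end Telescope

/-- Telescoping identity for the half-ADHM instanton solutions:
`Σ_{m=i+1}^{j-1} φ_{im}(z) φ^{inv}_{mj}(z) = −φ_{ij}(z) − φ^{inv}_{ij}(z)` whenever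
the constraints `Z_m W_m − W_m Z_{m+1} = Ỹ_m Y_{m+1}` hold and the resolvents are
defined at `z`. -/
theorem telescoping_identity (k n : ℕ → ℕ)
    (Z : ∀ i : ℕ, Matrix (Fin (k i)) (Fin (k i)) ℂ)
    (Y : ∀ i : ℕ, Matrix (Fin (n i)) (Fin (k i)) ℂ)
    (Yt : ∀ i : ℕ, Matrix (Fin (k i)) (Fin (n (i + 1))) ℂ)
    (W : ∀ i : ℕ, Matrix (Fin (k i)) (Fin (k (i + 1))) ℂ)
    (i j : ℕ) (hij : i < j) (z : ℂ)
    (hcon : ∀ m, i ≤ m → m + 2 ≤ j → Z m * W m - W m * Z (m + 1) = Yt m * Y (m + 1))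
    (hres : ∀ m, i ≤ m → m < j →
      IsUnit (z • (1 : Matrix (Fin (k m)) (Fin (k m)) ℂ) - Z m)) :
    ∑ m ∈ Finset.Ioo i j, phiF k n Z Y Yt W z i m * phiInvF k n Z Y Yt W z m j
      = -(phiF k n Z Y Yt W z i j) - phiInvF k n Z Y Yt W z i j := by
  obtain ⟨q, rfl⟩ : ∃ q, j = q + 1 := ⟨j - 1, by omega⟩
  have hiq : i ≤ q := by omega
  set T := telescopeTerm Z Y Yt W z i q
  calc ∑ m ∈ Finset.Ioo i (q + 1), phiF k n Z Y Yt W z i m * phiInvF k n Z Y Yt W z m (q + 1)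
      = ∑ p ∈ Finset.Ico i q, (T p - T (p + 1)) := by
        rw [← Finset.Ico_add_one_left_eq_Ioo, ← Finset.sum_Ico_add']
        refine Finset.sum_congr rfl fun p hp => ?_
        obtain ⟨hip, hpq⟩ := Finset.mem_Ico.mp hp
        exact phiF_mul_phiInvF Z Y Yt W z hip hpq (hcon p hip (by omega))
    _ = T i - T q := by
        rw [← neg_sub (T q), ← Finset.sum_Ico_sub T hiq, ← Finset.sum_neg_distrib]
        simp only [neg_sub]
    _ = _ := by
        rw [show T i = _ from telescopeTerm_self_left Z Y Yt W z (hres i le_rfl hij),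
          show T q = _ from telescopeTerm_self_right Z Y Yt W z (hres q hiq (by omega))]
        abel
end

section
/- Let ξ(z) = (𝔇(z), 𝔇̃(z)) be an n×(n+m) polynomial matrix with det 𝔇(z) of degree k. Then there exist an integer l with 0 ≤ l ≤ k, an n×n polynomial matrix 𝔇^{lc}(z) with det 𝔇^{lc} of degree l, and an n×(n+m) polynomial matrix ξ^{sm}(z) of rank n at every point z ∈ ℂ, such that ξ(z) = 𝔇^{lc}(z)·ξ^{sm}(z). Moreover, this decomposition is unique up to ξ^{sm} ↦ V(z)·ξ^{sm}, 𝔇^{lc} ↦ 𝔇^{lc}·V(z)⁻¹ with V(z) ∈ GL(n,ℂ[z]). -/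
open Matrix Polynomial

/-!
Since `det 𝔇 ≠ 0`, the rows of `ξ = (𝔇, 𝔇̃)` are linearly independent over the principal
ideal domain `ℂ[z]`. A Smith normal form of their span `N ⊆ ℂ[z]^{n+m}` consists of a basis
`(e_j)` of `ℂ[z]^{n+m}` and `n` of its vectors whose multiples `a_i e_{f(i)}` form a basis of
`N`. These `n` basis vectors are the rows of `ξ^{sm}`, and the coordinates of the rows of `ξ`
give `𝔇^{lc}`. Being part of a basis, `ξ^{sm}` has a polynomial right inverse, hence rank `n`
at every point, and `det 𝔇^{lc}` divides `det 𝔇`.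

Conversely, if `ξ^{sm}(z)` has rank `n` at every `z`, the maximal minors of `ξ^{sm}` have no
common zero, so they generate the unit ideal of `ℂ[z]` and adjugates of the minors assemble
into a right inverse `T`. Given two factorizations `𝔇₁ ξ₁ = 𝔇₂ ξ₂` with right inverses
`T₁, T₂`, the matrix `V = ξ₂ T₁` has inverse `ξ₁ T₂` and satisfies `ξ₂ = V ξ₁`, `𝔇₁ = 𝔇₂ V`.
-/

theorem Polynomial.exists_forall_eval_eq_zero_of_ne_top {K : Type*} [Field K] [IsAlgClosed K]
    {I : Ideal K[X]} (hI : I ≠ ⊤) : ∃ z : K, ∀ p ∈ I, p.eval z = 0 := by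
  obtain ⟨d, rfl⟩ := Submodule.IsPrincipal.principal I
  have hd : ¬ IsUnit d := fun hd => hI (Ideal.span_singleton_eq_top.mpr hd)
  obtain ⟨z, hz⟩ := IsAlgClosed.exists_root d fun h => hd (isUnit_iff_degree_eq_zero.mpr h)
  exact ⟨z, fun p hp => eval_eq_zero_of_dvd_of_eval_eq_zero (Ideal.mem_span_singleton.mp hp) hz⟩

namespace Module.Basis

variable {R : Type*} [CommRing R]

theorem SmithNormalForm.coe_eq_sum {M ι : Type*} [AddCommGroup M] [Module R M]
    {N : Submodule R M} {r : ℕ} (snf : Basis.SmithNormalForm N ι r) (x : N) :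
    (x : M) = ∑ i, (snf.bN.repr x i * snf.a i) • snf.bM (snf.f i) :=
  calc (x : M) = ((∑ i, snf.bN.repr x i • snf.bN i : N) : M) := by rw [snf.bN.sum_repr]
    _ = _ := by simp only [Submodule.coe_sum, Submodule.coe_smul, snf.snf, mul_smul]

theorem of_mul_of_repr_single_eq_one {ι κ σ : Type*} [Fintype ι] [DecidableEq ι]
    [DecidableEq σ] (b : Basis κ R (ι → R)) {f : σ → κ} (hf : Function.Injective f) :
    Matrix.of (fun i => b (f i)) * Matrix.of (fun j i => b.repr (Pi.single j 1) (f i)) = 1 := by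
  ext i i'
  have hrow : ∑ j, b (f i) j • Pi.single j (1 : R) = b (f i) := by
    ext j
    simp [Finset.sum_apply, Pi.single_apply]
  have h := congrArg (fun v => b.repr v (f i')) hrow
  simp only [map_sum, map_smul, Finsupp.coe_finsetSum, Finset.sum_apply, Finsupp.smul_apply,
    smul_eq_mul, repr_self] at h
  simp only [Matrix.mul_apply, Matrix.of_apply, h, Matrix.one_apply]
  rw [Finsupp.single_apply_left hf, Finsupp.single_apply]

end Module.Basis

namespace Matrix

variable {R : Type*} [CommRing R]

theorem mul_left_cancel_of_det_ne_zero [IsDomain R] {m ι : Type*} [Fintype m] [DecidableEq m]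
    {P : Matrix m m R} (hP : P.det ≠ 0) {A B : Matrix m ι R} (h : P * A = P * B) : A = B := by
  have h' := congrArg (P.adjugate * ·) h
  simp only [← Matrix.mul_assoc, adjugate_mul, smul_mul, Matrix.one_mul] at h'
  exact smul_right_injective (m → ι → R) hP h'

theorem linearIndependent_rows_fromCols_of_det_ne_zero [IsDomain R] {m ι : Type*} [Fintype m]
    [DecidableEq m] {D : Matrix m m R} (hD : D.det ≠ 0) (E : Matrix m ι R) :
    LinearIndependent R fun i => fromCols D E i :=
  .of_comp (LinearMap.funLeft R R Sum.inl) (linearIndependent_rows_of_det_ne_zero hD)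

theorem rank_map_eq_of_mul_eq_one {K : Type*} [Field K] {n : ℕ} {ι : Type*} [Fintype ι]
    (f : R →+* K) {A : Matrix (Fin n) ι R} {B : Matrix ι (Fin n) R} (h : A * B = 1) :
    (A.map f).rank = n := by
  have hf : A.map f * B.map f = 1 := by
    rw [← Matrix.map_mul, h, Matrix.map_one _ f.map_zero f.map_one]
  refine le_antisymm ((rank_le_card_height _).trans (Fintype.card_fin n).le) ?_
  calc n = (1 : Matrix (Fin n) (Fin n) K).rank := by simp
    _ = (A.map f * B.map f).rank := by rw [hf]
    _ ≤ (A.map f).rank := rank_mul_le_left _ _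

theorem exists_det_submatrix_ne_zero_of_rank_eq {K : Type*} [Field K] {n : ℕ} {ι : Type*}
    [Fintype ι] (A : Matrix (Fin n) ι K) (hA : A.rank = n) :
    ∃ g : Fin n → ι, (A.submatrix id g).det ≠ 0 := by
  classical
  obtain ⟨κ, a, ha, hspan, hli⟩ := exists_linearIndependent' K A.col
  have : Fintype κ := Fintype.ofInjective a ha
  have hcard : Fintype.card κ = n := by
    rw [linearIndependent_iff_card_eq_finrank_span.mp hli, Set.finrank, hspan,
      ← rank_eq_finrank_span_cols, hA]
  let e : Fin n ≃ κ := (Fintype.equivFinOfCardEq hcard).symm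
  refine ⟨a ∘ e, ?_⟩
  rw [← isUnit_iff_ne_zero, ← isUnit_iff_isUnit_det, ← linearIndependent_cols_iff_isUnit]
  exact hli.comp e e.injective

theorem exists_mul_eq_one_of_one_mem_span_det_submatrix {m ι : Type*} [Fintype m]
    [DecidableEq m] [Fintype ι] [DecidableEq ι] (A : Matrix m ι R)
    (h : (1 : R) ∈ Ideal.span (Set.range fun g : m → ι => (A.submatrix id g).det)) :
    ∃ B : Matrix ι m R, A * B = 1 := by
  obtain ⟨c, hc⟩ := (Submodule.mem_span_range_iff_exists_fun R).mp h
  refine ⟨∑ g, c g • ((1 : Matrix ι ι R).submatrix id g * (A.submatrix id g).adjugate), ?_⟩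
  have hcols (g : m → ι) : A * (1 : Matrix ι ι R).submatrix id g = A.submatrix id g := by
    simpa using mul_submatrix_one (Equiv.refl ι) g A
  simp only [Matrix.mul_sum, Matrix.mul_smul, ← Matrix.mul_assoc, hcols, mul_adjugate,
    smul_smul, ← Finset.sum_smul]
  simp only [smul_eq_mul] at hc
  rw [hc, one_smul]

theorem exists_mul_eq_one_of_forall_rank_map_eval {K : Type*} [Field K] [IsAlgClosed K]
    {n : ℕ} {ι : Type*} [Fintype ι] [DecidableEq ι] (A : Matrix (Fin n) ι K[X])
    (hA : ∀ z : K, (A.map (eval z)).rank = n) : ∃ B : Matrix ι (Fin n) K[X], A * B = 1 := by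
  refine A.exists_mul_eq_one_of_one_mem_span_det_submatrix ((Ideal.eq_top_iff_one _).mp ?_)
  by_contra hI
  obtain ⟨z, hz⟩ := exists_forall_eval_eq_zero_of_ne_top hI
  obtain ⟨g, hg⟩ := (A.map (eval z)).exists_det_submatrix_ne_zero_of_rank_eq (hA z)
  apply hg
  rw [submatrix_map, ← coe_evalRingHom, ← RingHom.mapMatrix_apply, ← RingHom.map_det]
  exact hz _ (Ideal.subset_span ⟨g, rfl⟩)

theorem exists_eq_mul_of_linearIndependent_rows [IsDomain R] [IsPrincipalIdealRing R] {n : ℕ}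
    {ι : Type*} [Fintype ι] [DecidableEq ι] (A : Matrix (Fin n) ι R)
    (hA : LinearIndependent R fun i => A i) :
    ∃ (L : Matrix (Fin n) (Fin n) R) (S : Matrix (Fin n) ι R) (T : Matrix ι (Fin n) R),
      A = L * S ∧ S * T = 1 := by
  set N := Submodule.span R (Set.range fun i => A i)
  have hmem (i : Fin n) : A i ∈ N := Submodule.subset_span ⟨i, rfl⟩
  obtain ⟨r, snf⟩ := N.smithNormalForm (Pi.basisFun R ι)
  obtain rfl : r = n := by
    have h := Module.finrank_eq_card_basis snf.bN
    rw [finrank_span_eq_card hA] at h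
    simpa using h.symm
  refine ⟨of fun i j => snf.bN.repr ⟨A i, hmem i⟩ j * snf.a j, _, _, ?_,
    snf.bM.of_mul_of_repr_single_eq_one snf.f.injective⟩
  ext i j
  simpa [Matrix.mul_apply, Finset.sum_apply] using congrFun (snf.coe_eq_sum ⟨A i, hmem i⟩) j

theorem exists_isUnit_det_of_mul_eq_mul [IsDomain R] {m ι : Type*} [Fintype m] [DecidableEq m]
    [Fintype ι] {L₁ L₂ : Matrix m m R} {S₁ S₂ : Matrix m ι R} {T₁ T₂ : Matrix ι m R}
    (hL₂ : L₂.det ≠ 0) (h : L₁ * S₁ = L₂ * S₂) (hT₁ : S₁ * T₁ = 1) (hT₂ : S₂ * T₂ = 1) :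
    ∃ V : Matrix m m R, IsUnit V.det ∧ S₂ = V * S₁ ∧ L₂ = L₁ * V⁻¹ := by
  have hL : L₂ * (S₂ * T₁) = L₁ := by
    rw [← Matrix.mul_assoc, ← h, Matrix.mul_assoc, hT₁, Matrix.mul_one]
  have hS : S₂ * T₁ * S₁ = S₂ := by
    refine mul_left_cancel_of_det_ne_zero hL₂ ?_
    rw [← Matrix.mul_assoc, hL, h]
  have hV : IsUnit (S₂ * T₁).det := by
    refine IsUnit.of_mul_eq_one (S₁ * T₂).det ?_
    rw [← det_mul, ← Matrix.mul_assoc, hS, hT₂, det_one]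
  refine ⟨S₂ * T₁, hV, hS.symm, ?_⟩
  rw [← hL, Matrix.mul_assoc, mul_nonsing_inv _ hV, Matrix.mul_one]

end Matrix

/-- Local–semilocal factorization of vortex moduli matrices: any `ξ(z) = (𝔇, 𝔇̃)` with
`det 𝔇` of degree `k` factors as `ξ = 𝔇^{lc} · ξ^{sm}` with `det 𝔇^{lc}` of degree
`l ≤ k` and `ξ^{sm}(z)` of rank `n` at every point; the factorization is unique up to
left multiplication of `ξ^{sm}` by an element `V ∈ GL(n, ℂ[z])` (and `𝔇^{lc} ↦ 𝔇^{lc} V⁻¹`). -/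
theorem local_semilocal_factorization (n m k : ℕ)
    (D : Matrix (Fin n) (Fin n) (Polynomial ℂ))
    (Dt : Matrix (Fin n) (Fin m) (Polynomial ℂ))
    (hD : D.det.degree = (k : WithBot ℕ)) :
    (∃ l : ℕ, l ≤ k ∧
      ∃ (Dlc Dsm : Matrix (Fin n) (Fin n) (Polynomial ℂ))
        (Dtsm : Matrix (Fin n) (Fin m) (Polynomial ℂ)),
        Dlc.det.degree = (l : WithBot ℕ) ∧
        D = Dlc * Dsm ∧ Dt = Dlc * Dtsm ∧
        ∀ z : ℂ, (Matrix.fromCols (Dsm.map (Polynomial.eval z))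
          (Dtsm.map (Polynomial.eval z))).rank = n) ∧
    (∀ (l₁ l₂ : ℕ) (Dlc₁ Dsm₁ Dlc₂ Dsm₂ : Matrix (Fin n) (Fin n) (Polynomial ℂ))
       (Dtsm₁ Dtsm₂ : Matrix (Fin n) (Fin m) (Polynomial ℂ)),
      Dlc₁.det.degree = (l₁ : WithBot ℕ) →
      D = Dlc₁ * Dsm₁ → Dt = Dlc₁ * Dtsm₁ →
      (∀ z : ℂ, (Matrix.fromCols (Dsm₁.map (Polynomial.eval z))
        (Dtsm₁.map (Polynomial.eval z))).rank = n) →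
      Dlc₂.det.degree = (l₂ : WithBot ℕ) →
      D = Dlc₂ * Dsm₂ → Dt = Dlc₂ * Dtsm₂ →
      (∀ z : ℂ, (Matrix.fromCols (Dsm₂.map (Polynomial.eval z))
        (Dtsm₂.map (Polynomial.eval z))).rank = n) →
      ∃ V : Matrix (Fin n) (Fin n) (Polynomial ℂ),
        IsUnit V.det ∧ Dsm₂ = V * Dsm₁ ∧ Dtsm₂ = V * Dtsm₁ ∧ Dlc₂ = Dlc₁ * V⁻¹) := by
  have hD₀ : D.det ≠ 0 := ne_zero_of_coe_le_degree hD.ge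
  refine ⟨?_, ?_⟩
  · obtain ⟨L, S, T, hξ, hST⟩ :=
      (fromCols D Dt).exists_eq_mul_of_linearIndependent_rows
        (linearIndependent_rows_fromCols_of_det_ne_zero hD₀ Dt)
    rw [← fromCols_toCols S, mul_fromCols, fromCols_ext_iff] at hξ
    obtain ⟨hDL, hDtL⟩ := hξ
    have hdvd : L.det ∣ D.det := ⟨_, hDL ▸ det_mul L S.toCols₁⟩
    refine ⟨L.det.natDegree, ?_, L, S.toCols₁, S.toCols₂,
      degree_eq_natDegree (ne_zero_of_dvd_ne_zero hD₀ hdvd), hDL, hDtL, fun z => ?_⟩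
    · exact natDegree_eq_of_degree_eq_some hD ▸ natDegree_le_of_dvd hdvd hD₀
    · rw [← fromCols_map, fromCols_toCols]
      exact rank_map_eq_of_mul_eq_one (evalRingHom z) hST
  · intro _ _ L₁ S₁ L₂ S₂ S'₁ S'₂ _ hD₁ hDt₁ hr₁ hl₂ hD₂ hDt₂ hr₂
    obtain ⟨T₁, hT₁⟩ := (fromCols S₁ S'₁).exists_mul_eq_one_of_forall_rank_map_eval
      (by simpa only [fromCols_map] using hr₁)
    obtain ⟨T₂, hT₂⟩ := (fromCols S₂ S'₂).exists_mul_eq_one_of_forall_rank_map_eval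
      (by simpa only [fromCols_map] using hr₂)
    obtain ⟨V, hV, hS, hL⟩ := exists_isUnit_det_of_mul_eq_mul
      (ne_zero_of_coe_le_degree hl₂.ge)
      (by rw [mul_fromCols, mul_fromCols, ← hD₁, ← hDt₁, ← hD₂, ← hDt₂]) hT₁ hT₂
    rw [mul_fromCols, fromCols_ext_iff] at hS
    exact ⟨V, hV, hS.1, hS.2, hL⟩
end
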